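/- arXiv:2308.11613 — 3 statements merged into one kernel-verified Lean document; each statement's English description precedes it below -/
import Mathlib

section
/- Let $m$ be even and let $a_1, \ldots, a_k$ be positive integers with $a_i \ge 3(m+1)$ for each $i$ and $\sum_i a_i = \ell(m+1)$ for some integer $\ell$. Let $S$ be a collection of pairs $\{x, m+1-x\}$ with $x \in [m/2]$ satisfying $|S| \ge \max\{\ell, m/4 + 2k\}$. Then there exists a subcollection $S' \subseteq S$ and a partition $I_1, \ldots, I_k$ of $\bigcup S'$ with $\sum_{x \in I_i} x = a_i$ for each $i$. -/
/-!
Every pair sums to `m + 1`, so a part whose sum has the right residue modulo `m + 1` and does not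
exceed its target can be completed with whole unused pairs, and `|S| ≥ ℓ` leaves enough of them.

The residues are fixed part by part, carrying a set `P` of leftover elements whose sum is congruent
to what the remaining parts still need. If the current target `a` is not congruent to `∑ P`, a
pigeonhole count in `ZMod (m + 1)` (which needs `m + 1` odd and more than `m / 4` unused pairs)
gives elements `u, v` of two distinct pairs with `u + v ≡ a - ∑ P`; the part receives
`P ∪ {u, v}` and the partners `m + 1 - u, m + 1 - v` become the new carry. Such a part has sum at
most `4 m < a + m + 1`, hence sum `a` minus a multiple of `m + 1`.
-/

open Finset Function

section

variable {α : Type*} {n : ℕ}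

lemma Fin.pairwise_disjoint_cons {s : Finset α} {f : Fin n → Finset α} :
    Pairwise (Disjoint on (Fin.cons s f : Fin (n + 1) → Finset α)) ↔
      (∀ i, Disjoint s (f i)) ∧ Pairwise (Disjoint on f) := by
  simp only [pairwise_fin_succ_iff, onFun, Fin.cons_zero, Fin.cons_succ, disjoint_comm,
    and_self_left]

lemma Fin.biUnion_univ_cons [DecidableEq α] (s : Finset α) (f : Fin n → Finset α) :
    univ.biUnion (Fin.cons s f : Fin (n + 1) → Finset α) = s ∪ univ.biUnion f := by
  ext
  simp [Fin.exists_fin_succ]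

lemma exists_pairwise_disjoint_subsets_card_eq [DecidableEq α] {R : Finset α} {d : Fin n → ℕ}
    (h : ∑ i, d i ≤ R.card) :
    ∃ F : Fin n → Finset α,
      (∀ i, F i ⊆ R) ∧ Pairwise (Disjoint on F) ∧ ∀ i, (F i).card = d i := by
  induction n generalizing R with
  | zero => exact ⟨finZeroElim, finZeroElim, fun i => i.elim0, finZeroElim⟩
  | succ n ih =>
    rw [Fin.sum_univ_succ] at h
    obtain ⟨F₀, hF₀R, hF₀⟩ := exists_subset_card_eq (show d 0 ≤ R.card by omega)
    obtain ⟨F, hFR, hF, hFd⟩ := ih (R := R \ F₀) (d := fun i => d i.succ)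
      (by rw [card_sdiff_of_subset hF₀R]; omega)
    refine ⟨Fin.cons F₀ F, Fin.forall_fin_succ.2 ⟨hF₀R, fun i => (hFR i).trans sdiff_subset⟩,
      Fin.pairwise_disjoint_cons.2
        ⟨fun i => disjoint_of_subset_right (hFR i) disjoint_sdiff, hF⟩,
      Fin.forall_fin_succ.2 ⟨hF₀, hFd⟩⟩

end

lemma Nat.exists_add_mul_eq_of_natCast_eq {n s a : ℕ} (h : (s : ZMod n) = a) (hs : s < a + n) :
    ∃ d, s + d * n = a := by
  rw [ZMod.natCast_eq_natCast_iff] at h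
  rcases le_or_gt s a with hle | hlt
  · obtain ⟨d, hd⟩ := (Nat.modEq_iff_dvd' hle).1 h
    exact ⟨d, by rw [mul_comm, ← hd]; omega⟩
  · obtain ⟨d, hd⟩ := (Nat.modEq_iff_dvd' hlt.le).1 h.symm
    have : n ≤ n * d := Nat.le_mul_of_pos_right n (Nat.pos_of_ne_zero (by rintro rfl; omega))
    omega

namespace PairSeparation

def pair (m x : ℕ) : Finset ℕ := {x, m + 1 - x}

def pairs (m : ℕ) (X : Finset ℕ) : Finset ℕ := X.biUnion (pair m)

variable {m : ℕ} {x : ℕ} {X Y : Finset ℕ}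

lemma mem_pair {y : ℕ} : y ∈ pair m x ↔ y = x ∨ y = m + 1 - x := by
  simp [pair]

lemma sum_pair (hx : x ∈ Icc 1 (m / 2)) : ∑ y ∈ pair m x, y = m + 1 := by
  rw [mem_Icc] at hx
  rw [pair, Finset.sum_pair (by omega)]
  omega

lemma card_pair (hx : x ∈ Icc 1 (m / 2)) : (pair m x).card = 2 := by
  rw [mem_Icc] at hx
  exact Finset.card_pair (by omega)

lemma pair_subset_Icc (hx : x ∈ Icc 1 (m / 2)) : pair m x ⊆ Icc 1 m := by
  intro y hy
  rw [mem_pair] at hy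
  rw [mem_Icc] at hx ⊢
  omega

lemma pairwiseDisjoint_pair : (Icc 1 (m / 2) : Set ℕ).PairwiseDisjoint (pair m) := by
  intro x hx y hy hxy
  simp only [coe_Icc, Set.mem_Icc] at hx hy
  rw [onFun, disjoint_left]
  intro z
  simp only [mem_pair]
  omega

lemma injOn_pair : Set.InjOn (pair m) (Icc 1 (m / 2)) := by
  intro x hx y hy hxy
  have : x ∈ pair m y := hxy ▸ mem_pair.2 (Or.inl rfl)
  simp only [coe_Icc, Set.mem_Icc] at hx hy
  rw [mem_pair] at this
  omega

lemma pairs_subset_Icc (hX : X ⊆ Icc 1 (m / 2)) : pairs m X ⊆ Icc 1 m :=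
  biUnion_subset.2 fun _ hx => pair_subset_Icc (hX hx)

lemma pairs_union : pairs m (X ∪ Y) = pairs m X ∪ pairs m Y :=
  union_biUnion

lemma pairs_mono (h : X ⊆ Y) : pairs m X ⊆ pairs m Y :=
  biUnion_subset_biUnion_of_subset_left _ h

lemma disjoint_pairs (hX : X ⊆ Icc 1 (m / 2)) (hY : Y ⊆ Icc 1 (m / 2)) (h : Disjoint X Y) :
    Disjoint (pairs m X) (pairs m Y) := by
  rw [pairs, disjoint_biUnion_left]
  intro x hx
  rw [pairs, disjoint_biUnion_right]
  exact fun y hy =>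
    pairwiseDisjoint_pair (hX hx) (hY hy) fun hxy => disjoint_left.1 h hx (hxy ▸ hy)

lemma sum_pairs (hX : X ⊆ Icc 1 (m / 2)) : ∑ y ∈ pairs m X, y = X.card * (m + 1) := by
  rw [pairs, sum_biUnion (pairwiseDisjoint_pair.subset (coe_subset.2 hX))]
  exact sum_const_nat fun x hx => sum_pair (hX hx)

lemma card_pairs (hX : X ⊆ Icc 1 (m / 2)) : (pairs m X).card = X.card * 2 := by
  rw [pairs, card_biUnion (pairwiseDisjoint_pair.subset (coe_subset.2 hX))]
  exact sum_const_nat fun x hx => card_pair (hX hx)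

-- Pigeonhole in `ZMod (m + 1)`: the residues of `pairs m T` and `r` minus them are too many to be
-- disjoint, and since `m + 1` is odd, at most one common residue `α` has `α + α = r`.
lemma exists_mem_pair_add_eq (hm : Even m) {T : Finset ℕ} (hT : T ⊆ Icc 1 (m / 2))
    (hcard : m + 3 ≤ 4 * T.card) {r : ZMod (m + 1)} (hr : r ≠ 0) :
    ∃ x ∈ T, ∃ y ∈ T, x ≠ y ∧
      ∃ u ∈ pair m x, ∃ v ∈ pair m y, (u + v : ZMod (m + 1)) = r := by
  set A : Finset (ZMod (m + 1)) := (pairs m T).image (↑)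
  have hA : A.card = T.card * 2 := by
    rw [card_image_of_injOn, card_pairs hT]
    intro b hb c hc hbc
    have hb := mem_Icc.1 (pairs_subset_Icc hT hb)
    have hc := mem_Icc.1 (pairs_subset_Icc hT hc)
    simpa [Nat.mod_eq_of_lt (show b < m + 1 by omega),
      Nat.mod_eq_of_lt (show c < m + 1 by omega)] using
      (ZMod.natCast_eq_natCast_iff' b c (m + 1)).1 hbc
  set B := A ∩ A.image (r - ·)
  have hB : 1 < B.card := by
    have h₁ : B.card + (A ∪ A.image (r - ·)).card = A.card + A.card := by
      rw [card_inter_add_card_union, card_image_of_injective _ sub_right_injective]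
    have h₂ : (A ∪ A.image (r - ·)).card ≤ m + 1 := (card_le_univ _).trans_eq (ZMod.card _)
    omega
  have h2 : IsUnit (2 : ZMod (m + 1)) := by
    simpa using (ZMod.isUnit_iff_coprime 2 (m + 1)).2 (Nat.coprime_two_left.2 hm.add_one)
  obtain ⟨α, hαB, hα⟩ : ∃ α ∈ B, α + α ≠ r := by
    obtain ⟨α₁, hα₁, α₂, hα₂, hne⟩ := one_lt_card.1 hB
    by_contra! h
    exact hne (h2.mul_left_cancel (by rw [two_mul, two_mul, h _ hα₁, h _ hα₂]))
  obtain ⟨hαA, γ, hγA, hγα⟩ : α ∈ A ∧ ∃ γ ∈ A, r - γ = α := by simpa [B] using hαB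
  obtain ⟨u, hu, rfl⟩ := mem_image.1 hαA
  obtain ⟨v, hv, rfl⟩ := mem_image.1 hγA
  obtain ⟨x, hxT, hux⟩ := mem_biUnion.1 hu
  obtain ⟨y, hyT, hvy⟩ := mem_biUnion.1 hv
  refine ⟨x, hxT, y, hyT, ?_, u, hux, v, hvy, by linear_combination -hγα⟩
  rintro rfl
  have hx := mem_Icc.1 (hT hxT)
  rw [mem_pair] at hux hvy
  rcases (show v = u ∨ u + v = m + 1 by omega) with rfl | huv
  · exact hα (by linear_combination -hγα)
  · have h0 : ((u + v : ℕ) : ZMod (m + 1)) = 0 := by rw [huv]; exact ZMod.natCast_self _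
    push_cast at h0
    exact hr (by linear_combination h0 + hγα)

lemma exists_subset_pairs_sum_eq (hm : Even m) {T : Finset ℕ} (hT : T ⊆ Icc 1 (m / 2))
    (hcard : m + 3 ≤ 4 * T.card) (r : ZMod (m + 1)) :
    ∃ X ⊆ T, X.card ≤ 2 ∧ ∃ E ⊆ pairs m X, ((∑ y ∈ E, y : ℕ) : ZMod (m + 1)) = r ∧
      ∑ y ∈ E, y ≤ 2 * m ∧ ∑ y ∈ pairs m X \ E, y ≤ 2 * m := by
  rcases eq_or_ne r 0 with rfl | hr
  · exact ⟨∅, empty_subset _, by simp, ∅, empty_subset _, by simp, by simp, by simp [pairs]⟩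
  obtain ⟨x, hxT, y, hyT, hxy, u, hu, v, hv, huv⟩ := exists_mem_pair_add_eq hm hT hcard hr
  have hXT : {x, y} ⊆ T := insert_subset hxT (singleton_subset_iff.2 hyT)
  have hE : {u, v} ⊆ pairs m {x, y} := by
    simp only [insert_subset_iff, singleton_subset_iff, pairs, mem_biUnion]
    exact ⟨⟨x, by simp, hu⟩, ⟨y, by simp, hv⟩⟩
  have hu' := mem_Icc.1 (pair_subset_Icc (hT hxT) hu)
  have hv' := mem_Icc.1 (pair_subset_Icc (hT hyT) hv)
  have hsumE : ∑ z ∈ {u, v}, z = u + v :=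
    Finset.sum_pair fun h => disjoint_left.1 (pairwiseDisjoint_pair (hT hxT) (hT hyT) hxy) hu
      (h ▸ hv)
  have hsplit : ∑ z ∈ pairs m {x, y} \ {u, v}, z + (u + v) = 2 * (m + 1) := by
    rw [← hsumE, sum_sdiff hE, sum_pairs (hXT.trans hT), Finset.card_pair hxy]
  exact ⟨{x, y}, hXT, card_le_two, {u, v}, hE, by push_cast [hsumE]; exact huv, by omega,
    by omega⟩

lemma exists_partition_add_mul_eq (hm : Even m) (k : ℕ) {T P : Finset ℕ}
    {a : Fin (k + 1) → ℕ} (hT : T ⊆ Icc 1 (m / 2)) (hPT : Disjoint P (pairs m T))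
    (hP : ∑ y ∈ P, y ≤ 2 * m)
    (ha : ∀ i, 3 * (m + 1) ≤ a i)
    (hsum : ((∑ i, a i : ℕ) : ZMod (m + 1)) = ((∑ y ∈ P, y : ℕ) : ZMod (m + 1)))
    (hcard : m + 8 * k ≤ 4 * T.card) :
    ∃ U ⊆ T, ∃ J : Fin (k + 1) → Finset ℕ, Pairwise (Disjoint on J) ∧
      univ.biUnion J = P ∪ pairs m U ∧ ∀ i, ∃ d, ∑ y ∈ J i, y + d * (m + 1) = a i := by
  induction k generalizing T P with
  | zero =>
    refine ⟨∅, empty_subset _, fun _ => P,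
      fun i j h => (h ((Fin.fin_one_eq_zero i).trans (Fin.fin_one_eq_zero j).symm)).elim,
      by simp [pairs], fun i => ?_⟩
    rw [Fin.sum_univ_one, ← Fin.fin_one_eq_zero i] at hsum
    exact Nat.exists_add_mul_eq_of_natCast_eq hsum.symm (by linarith [ha i])
  | succ k ih =>
    obtain ⟨X, hXT, hXcard, E, hEX, hEr, hE, hE'⟩ :=
      exists_subset_pairs_sum_eq hm hT (by omega) ((a 0 : ZMod (m + 1)) - ∑ y ∈ P, y)
    have hX := hXT.trans hT
    have hXTX : Disjoint (pairs m X) (pairs m (T \ X)) :=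
      disjoint_pairs hX (sdiff_subset.trans hT) disjoint_sdiff
    have hPX : Disjoint P (pairs m X) := hPT.mono_right (pairs_mono hXT)
    have hX0 : ((∑ y ∈ pairs m X, y : ℕ) : ZMod (m + 1)) = 0 := by
      rw [sum_pairs hX, Nat.cast_mul, ZMod.natCast_self, mul_zero]
    obtain ⟨U, hUT, J, hJ, hJU, hJa⟩ := ih (T := T \ X) (P := pairs m X \ E)
      (a := fun i => a i.succ) (sdiff_subset.trans hT) (hXTX.mono_left sdiff_subset) hE'
      (fun i => ha _) (by
        rw [← sum_sdiff hEX, Nat.cast_add] at hX0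
        rw [Fin.sum_univ_succ, Nat.cast_add] at hsum
        linear_combination hsum + hEr - hX0)
      (by rw [card_sdiff_of_subset hXT]; omega)
    refine ⟨X ∪ U, union_subset hXT (hUT.trans sdiff_subset), Fin.cons (P ∪ E) J,
      Fin.pairwise_disjoint_cons.2 ⟨fun i => ?_, hJ⟩, ?_, Fin.forall_fin_succ.2 ⟨?_, hJa⟩⟩
    · refine disjoint_of_subset_right ((subset_biUnion_of_mem J (mem_univ i)).trans hJU.le) ?_
      rw [disjoint_union_left, disjoint_union_right, disjoint_union_right]
      exact ⟨⟨hPX.mono_right sdiff_subset,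
        hPT.mono_right (pairs_mono (hUT.trans sdiff_subset))⟩,
        disjoint_sdiff, hXTX.mono hEX (pairs_mono hUT)⟩
    · rw [Fin.biUnion_univ_cons, hJU, pairs_union, union_assoc, ← union_assoc E,
        union_sdiff_of_subset hEX]
    · have hPE : Disjoint P E := hPX.mono_right hEX
      rw [Fin.cons_zero, sum_union hPE]
      refine Nat.exists_add_mul_eq_of_natCast_eq ?_ (by linarith [ha 0])
      push_cast at hEr ⊢
      linear_combination hEr

lemma exists_partition_sum_eq (hm : Even m) {k ℓ : ℕ} {T : Finset ℕ} {a : Fin (k + 1) → ℕ}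
    (hT : T ⊆ Icc 1 (m / 2)) (ha : ∀ i, 3 * (m + 1) ≤ a i) (hsum : ∑ i, a i = ℓ * (m + 1))
    (hℓ : ℓ ≤ T.card) (hcard : m + 8 * k ≤ 4 * T.card) :
    ∃ V ⊆ T, ∃ I : Fin (k + 1) → Finset ℕ, Pairwise (Disjoint on I) ∧
      univ.biUnion I = pairs m V ∧ ∀ i, ∑ y ∈ I i, y = a i := by
  obtain ⟨U, hUT, J, hJ, hJU, hJa⟩ := exists_partition_add_mul_eq hm k hT (P := ∅)
    (disjoint_empty_left _) (by simp) ha (by simp [hsum]) hcard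
  rw [empty_union] at hJU
  choose d hd using hJa
  have hU := hUT.trans hT
  have hd_le : ∑ i, d i ≤ (T \ U).card := by
    have h : (U.card + ∑ i, d i) * (m + 1) = ℓ * (m + 1) := by
      rw [← hsum, ← sum_congr rfl fun i _ => hd i, sum_add_distrib,
        ← sum_biUnion (hJ.set_pairwise _), hJU, sum_pairs hU, ← sum_mul, add_mul]
    rw [card_sdiff_of_subset hUT]
    have := Nat.eq_of_mul_eq_mul_right (Nat.succ_pos m) h
    omega
  obtain ⟨F, hFT, hF, hFd⟩ := exists_pairwise_disjoint_subsets_card_eq hd_le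
  have hFT' : ∀ i, F i ⊆ T := fun i => (hFT i).trans sdiff_subset
  have hJF : ∀ i j, Disjoint (J i) (pairs m (F j)) := fun i j =>
    (disjoint_pairs hU ((hFT' j).trans hT)
      (disjoint_of_subset_right (hFT j) disjoint_sdiff)).mono_left
      (hJU ▸ subset_biUnion_of_mem J (mem_univ i))
  refine ⟨U ∪ univ.biUnion F, union_subset hUT (biUnion_subset.2 fun i _ => hFT' i),
    fun i => J i ∪ pairs m (F i), fun i j hij => ?_, ?_, fun i => ?_⟩
  · rw [onFun, disjoint_union_left, disjoint_union_right, disjoint_union_right]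
    exact ⟨⟨hJ hij, hJF i j⟩, (hJF j i).symm,
      disjoint_pairs ((hFT' i).trans hT) ((hFT' j).trans hT) (hF hij)⟩
  · rw [biUnion_union, hJU, pairs_union]
    exact congrArg _ (biUnion_biUnion _ _ _).symm
  · rw [sum_union (hJF i i), sum_pairs ((hFT' i).trans hT), hFd, hd]

end PairSeparation

open PairSeparation in
theorem separates_all_large_general
    (m k ℓ : ℕ) (hmeven : Even m) (hk : 0 < k)
    (a : Fin k → ℕ) (ha : ∀ i, 3 * (m + 1) ≤ a i)
    (hsum : ∑ i, a i = ℓ * (m + 1))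
    (S : Finset (Finset ℕ))
    (hS : S ⊆ (Finset.Icc 1 (m / 2)).image fun x => ({x, m + 1 - x} : Finset ℕ))
    (hcard₁ : ℓ ≤ S.card)
    (hcard₂ : (m : ℚ) / 4 + 2 * k ≤ S.card) :
    ∃ S' ⊆ S, ∃ I : Fin k → Finset ℕ,
      (∀ i j, i ≠ j → Disjoint (I i) (I j)) ∧
      Finset.univ.biUnion I = S'.biUnion id ∧
      (∀ i, ∑ x ∈ I i, x = a i) := by
  obtain ⟨k, rfl⟩ := Nat.exists_eq_succ_of_ne_zero hk.ne'
  obtain ⟨T, hT, rfl⟩ := subset_image_iff.1 hS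
  have hTcard : (T.image fun x => ({x, m + 1 - x} : Finset ℕ)).card = T.card :=
    card_image_of_injOn (injOn_pair.mono hT)
  rw [hTcard] at hcard₁ hcard₂
  have hcard : m + 8 * k ≤ 4 * T.card := by
    have : (m : ℚ) + 8 * k ≤ 4 * T.card := by push_cast at hcard₂; linarith
    exact_mod_cast this
  obtain ⟨V, hVT, I, hI, hIV, hIa⟩ := exists_partition_sum_eq hmeven hT ha hsum hcard₁ hcard
  exact ⟨V.image (pair m), image_subset_image hVT, I, fun i j h => hI h,
    by rw [hIV, image_biUnion]; rfl, hIa⟩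

/-- Claim: for even `m`, if `a 1, …, a k` are positive integers with `a i ≥ 3(m+1)` summing to
`ℓ(m+1)`, and `S` is a collection of pairs `{x, m+1-x}` (`x ∈ [m/2]`) with
`|S| ≥ max {ℓ, m/4 + 2k}`, then some subcollection `S' ⊆ S` has its union partitioned into
sets `I 1, …, I k` with `∑ I i = a i`. -/
theorem separates_all_large
    (m k ℓ : ℕ) (hm : 0 < m) (hmeven : Even m) (hk : 0 < k)
    (a : Fin k → ℕ) (ha : ∀ i, 3 * (m + 1) ≤ a i)
    (hsum : ∑ i, a i = ℓ * (m + 1))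
    (S : Finset (Finset ℕ))
    (hS : S ⊆ (Finset.Icc 1 (m / 2)).image fun x => ({x, m + 1 - x} : Finset ℕ))
    (hcard₁ : ℓ ≤ S.card)
    (hcard₂ : (m : ℚ) / 4 + 2 * k ≤ S.card) :
    ∃ S' ⊆ S, ∃ I : Fin k → Finset ℕ,
      (∀ i j, i ≠ j → Disjoint (I i) (I j)) ∧
      Finset.univ.biUnion I = S'.biUnion id ∧
      (∀ i, ∑ x ∈ I i, x = a i) :=
  separates_all_large_general m k ℓ hmeven hk a ha hsum S hS hcard₁ hcard₂
end

section
/- Let $G$ be any graph with $e(G) \ge 1$. Iteratively remove a vertex of maximum degree whenever that degree exceeds $c\sqrt{e}$ of the current graph, with $c = 10^6$; let $d_1 \ge d_2 \ge \cdots \ge d_k$ be the degrees (in the current graph) of the removed vertices, and suppose the last graph before removal has at least one edge. Then $d_i \ge c(k - i + 1)$ for every $i \in [k]$. -/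
/-- The high-degree vertex removal process: if `v 0, v 1, …, v (k-1)` are successively removed
vertices, each of maximum degree in the current graph and of degree `deg i > c √(current edges)`
with `c = 10^6`, and the graph before the last removal still has an edge, then
`deg i ≥ c (k - i)` for every `i` (with 0-indexing, so `d_i ≥ c(k - i + 1)` in 1-indexing). -/
theorem degrees_of_removal_process {V : Type*} [Fintype V] [DecidableEq V]
    (G : SimpleGraph V) [DecidableRel G.Adj] (k : ℕ) (hk : 0 < k)
    (v : Fin k → V) (hinj : Function.Injective v) (deg : Fin k → ℕ)
    (hdeg : ∀ i, deg i =
      (Finset.univ.filter fun w => G.Adj (v i) w ∧ ∀ j, j < i → v j ≠ w).card)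
    (hbig : ∀ i : Fin k, (deg i : ℝ) >
      10 ^ 6 * Real.sqrt
        ((G.edgeFinset.filter fun e => ∀ j, j < i → ¬ v j ∈ e).card))
    (hmax : ∀ i : Fin k, ∀ w : V, (∀ j, j < i → v j ≠ w) →
      (Finset.univ.filter fun u => G.Adj w u ∧ ∀ j, j < i → v j ≠ u).card ≤ deg i)
    (hlast : 0 < (G.edgeFinset.filter fun e => ∀ j : Fin k, (j : ℕ) < k - 1 → ¬ v j ∈ e).card) :
    ∀ i : Fin k, 10 ^ 6 * (k - (i : ℕ)) ≤ deg i := by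
  classical
  set E : ℕ → ℕ := fun m =>
    (G.edgeFinset.filter fun e => ∀ j : Fin k, (j : ℕ) < m → ¬ v j ∈ e).card with hE
  -- hbig's filter equals E i
  have hEi : ∀ i : Fin k,
      (G.edgeFinset.filter fun e => ∀ j, j < i → ¬ v j ∈ e).card = E (i : ℕ) := by
    intro i
    apply congrArg
    apply Finset.filter_congr
    intro e _
    constructor
    · intro h j hj; exact h j hj
    · intro h j hj; exact h j hj
  -- count of edges at v i avoiding earlier vertices = deg i
  have hcard : ∀ i : Fin k,
      (G.edgeFinset.filter fun e => v i ∈ e ∧ ∀ j, j < i → ¬ v j ∈ e).card = deg i := by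
    intro i
    rw [hdeg i]
    have other_eq : ∀ (w : V) (h : v i ∈ s(v i, w)), Sym2.Mem.other' h = w := by
      intro w h
      have := Sym2.other_spec' h
      exact Sym2.congr_right.mp this
    refine Finset.card_bij' (fun e he => Sym2.Mem.other' (Finset.mem_filter.mp he).2.1)
      (fun w _ => s(v i, w)) ?hi ?hj ?left ?right
    case hi =>
      intro e he
      have h := Finset.mem_filter.mp he
      have hvi : v i ∈ e := h.2.1
      have hspec : s(v i, Sym2.Mem.other' hvi) = e := Sym2.other_spec' hvi
      simp only [Finset.mem_filter, Finset.mem_univ, true_and]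
      constructor
      · rw [← SimpleGraph.mem_edgeSet, hspec]
        exact SimpleGraph.mem_edgeFinset.mp h.1
      · intro j hj hjw
        exact h.2.2 j hj (hjw ▸ Sym2.other_mem' hvi)
    case hj =>
      intro w hw
      have h := (Finset.mem_filter.mp hw).2
      simp only [Finset.mem_filter]
      refine ⟨SimpleGraph.mem_edgeFinset.mpr h.1, Sym2.mem_mk_left _ _, ?_⟩
      intro j hj hmem
      rcases Sym2.mem_iff.mp hmem with h1 | h2
      · exact (Fin.ne_of_lt hj) (hinj h1)
      · exact h.2 j hj h2
    case left =>
      intro e he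
      exact Sym2.other_spec' _
    case right =>
      intro w hw
      exact other_eq w _
  -- recurrence
  have hrec : ∀ i : Fin k, E (i : ℕ) = deg i + E ((i : ℕ) + 1) := by
    intro i
    have hsplit := Finset.card_filter_add_card_filter_not
      (s := G.edgeFinset.filter fun e => ∀ j : Fin k, (j : ℕ) < (i : ℕ) → ¬ v j ∈ e)
      (p := fun e => v i ∈ e)
    have h1 : ((G.edgeFinset.filter fun e => ∀ j : Fin k, (j : ℕ) < (i : ℕ) → ¬ v j ∈ e).filter
        fun e => v i ∈ e)
        = G.edgeFinset.filter fun e => v i ∈ e ∧ ∀ j, j < i → ¬ v j ∈ e := by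
      rw [Finset.filter_filter]
      apply Finset.filter_congr
      intro e _
      constructor
      · rintro ⟨ha, hb⟩; exact ⟨hb, fun j hj => ha j hj⟩
      · rintro ⟨hb, ha⟩; exact ⟨fun j hj => ha j hj, hb⟩
    have h2 : ((G.edgeFinset.filter fun e => ∀ j : Fin k, (j : ℕ) < (i : ℕ) → ¬ v j ∈ e).filter
        fun e => ¬ v i ∈ e)
        = G.edgeFinset.filter fun e => ∀ j : Fin k, (j : ℕ) < (i : ℕ) + 1 → ¬ v j ∈ e := by
      rw [Finset.filter_filter]
      apply Finset.filter_congr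
      intro e _
      constructor
      · rintro ⟨ha, hb⟩ j hj
        rcases Nat.lt_succ_iff_lt_or_eq.mp hj with h | h
        · exact ha j h
        · have : j = i := Fin.ext h
          rw [this]; exact hb
      · intro h
        refine ⟨fun j hj => h j (Nat.lt_succ_of_lt hj), h i (Nat.lt_succ_self _)⟩
    rw [h1, h2, hcard i] at hsplit
    simp only [hE]
    omega
  -- from a square lower bound on E i, get a degree lower bound
  have sqrt_step : ∀ (i : Fin k) (m : ℕ), m ^ 2 ≤ E (i : ℕ) → 10 ^ 6 * m ≤ deg i := by
    intro i m hm
    have hb := hbig i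
    rw [hEi i] at hb
    have h1 : (m : ℝ) ≤ Real.sqrt (E (i : ℕ)) := by
      rw [show (m : ℝ) = Real.sqrt ((m : ℝ) ^ 2) from (Real.sqrt_sq (by positivity)).symm]
      apply Real.sqrt_le_sqrt
      exact_mod_cast hm
    have h2 : ((10 ^ 6 * m : ℕ) : ℝ) < (deg i : ℝ) := by
      push_cast
      nlinarith [h1]
    exact le_of_lt (by exact_mod_cast h2)
  -- main downward induction
  have key : ∀ n : ℕ, ∀ i : Fin k, k - (i : ℕ) = n + 1 →
      10 ^ 6 * (n + 1) ≤ deg i ∧ 10 ^ 6 * ((n + 1) * (n + 2)) ≤ 2 * E (i : ℕ) := by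
    intro n
    induction n with
    | zero =>
      intro i hi
      have hElast : 1 ≤ E (i : ℕ) := by
        have : (i : ℕ) = k - 1 := by omega
        rw [this]
        exact hlast
      have hd : 10 ^ 6 * 1 ≤ deg i := sqrt_step i 1 (by simpa using hElast)
      refine ⟨hd, ?_⟩
      have := hrec i
      omega
    | succ n ih =>
      intro i hi
      have hik : (i : ℕ) + 1 < k := by omega
      set i' : Fin k := ⟨(i : ℕ) + 1, hik⟩ with hi'
      have hki' : k - (i' : ℕ) = n + 1 := by simp [hi']; omega
      obtain ⟨hd', hE'⟩ := ih i' hki'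
      have hEmono : E ((i : ℕ) + 1) ≤ E (i : ℕ) := by
        have := hrec i
        omega
      have hEsq : (n + 2) ^ 2 ≤ E (i : ℕ) := by
        have : (i' : ℕ) = (i : ℕ) + 1 := rfl
        rw [this] at hE'
        nlinarith
      have hd : 10 ^ 6 * (n + 2) ≤ deg i := sqrt_step i (n + 2) hEsq
      refine ⟨hd, ?_⟩
      have hr := hrec i
      have : (i' : ℕ) = (i : ℕ) + 1 := rfl
      rw [this] at hE'
      nlinarith
  intro i
  have hik : (i : ℕ) < k := i.isLt
  have := key (k - (i : ℕ) - 1) i (by omega)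
  have h := this.1
  have : k - (i : ℕ) - 1 + 1 = k - (i : ℕ) := by omega
  omega
end

section
/- Let $X_1, \ldots, X_m$ be independent random variables with $X_i$ taking values in a set $S_i$, and let $f : \prod_i S_i \to \mathbb{R}$ satisfy the bounded differences condition: $|f(\mathbf{x}) - f(\mathbf{x}')| \le c_k$ whenever $\mathbf{x}, \mathbf{x}'$ differ only in the $k$-th coordinate. Then for every $t > 0$, $\Pr[f(X_1, \ldots, X_m) \le \mathbb{E}[f(X_1, \ldots, X_m)] - t] \le \exp(-2t^2 / \sum_{k=1}^m c_k^2)$. -/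
/-!
Peel off the first coordinate. Averaging `f` over it gives a function of the remaining
coordinates that still has bounded differences, so by induction it is sub-Gaussian around its mean
with variance proxy `∑_{k ≥ 1} c_k² / 4`. For fixed remaining coordinates, `f` minus this average
is centred with range at most `c_0`, hence sub-Gaussian with proxy `c_0² / 4` by Hoeffding's
lemma; by Fubini the two moment generating function bounds multiply. Under independence the law
of `(X_1, …, X_m)` is the product measure, and the Chernoff bound for the proxy `∑ c_k² / 4`
is the claimed tail bound.
-/

open MeasureTheory ProbabilityTheory Real
open scoped NNReal

def HasBoundedDifferences {ι : Type*} {S : ι → Type*} (f : (∀ i, S i) → ℝ) (c : ι → ℝ) :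
    Prop :=
  ∀ (x x' : ∀ i, S i) (k : ι), (∀ j, j ≠ k → x j = x' j) → |f x - f x'| ≤ c k

namespace HasBoundedDifferences

section

variable {ι : Type*} {S : ι → Type*} {f : (∀ i, S i) → ℝ} {c : ι → ℝ}

theorem abs_sub_le_sum [Fintype ι] (hf : HasBoundedDifferences f c) (x x' : ∀ i, S i) :
    |f x - f x'| ≤ ∑ k, c k := by
  classical
  -- change the coordinates in `A` one at a time
  suffices h : ∀ A : Finset ι, ∀ x : ∀ i, S i,
      (∀ j, j ∉ A → x j = x' j) → |f x - f x'| ≤ ∑ k ∈ A, c k from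
    h Finset.univ x fun j hj => absurd (Finset.mem_univ j) hj
  intro A
  induction A using Finset.induction_on with
  | empty =>
    intro x hx
    simp [funext fun j => hx j (Finset.notMem_empty j)]
  | insert a A ha ih =>
    intro x hx
    have h_step : |f x - f (Function.update x a (x' a))| ≤ c a :=
      hf _ _ a fun j hj => (Function.update_of_ne hj _ _).symm
    have h_rest : |f (Function.update x a (x' a)) - f x'| ≤ ∑ k ∈ A, c k := by
      refine ih _ fun j hj => ?_
      rcases eq_or_ne j a with rfl | hja
      · exact Function.update_self ..
      · rw [Function.update_of_ne hja]
        exact hx j (by simp [hja, hj])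
    rw [Finset.sum_insert ha]
    exact (abs_sub_le _ _ _).trans (add_le_add h_step h_rest)

theorem integral {α : Type*} [MeasurableSpace α] {μ : Measure α} [IsProbabilityMeasure μ]
    {φ : α → (∀ i, S i) → ℝ} (hφ : ∀ y, HasBoundedDifferences (φ y) c)
    (hint : ∀ x, Integrable (fun y => φ y x) μ) :
    HasBoundedDifferences (fun x => ∫ y, φ y x ∂μ) c := by
  intro x x' k hxx'
  rw [← integral_sub (hint x) (hint x')]
  calc ‖∫ y, (φ y x - φ y x') ∂μ‖ ≤ ∫ _, c k ∂μ :=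
        norm_integral_le_of_norm_le (integrable_const _)
          (ae_of_all _ fun y => hφ y x x' k hxx')
    _ = c k := by simp

end

theorem comp_insertNth {n : ℕ} {S : Fin (n + 1) → Type*} {f : (∀ i, S i) → ℝ}
    {c : Fin (n + 1) → ℝ} (hf : HasBoundedDifferences f c) (i : Fin (n + 1)) (y : S i) :
    HasBoundedDifferences (fun z => f (i.insertNth y z)) (fun j => c (i.succAbove j)) := by
  intro z z' k hzz'
  refine hf _ _ _ fun j hj => ?_
  rcases eq_or_ne j i with rfl | hji
  · simp
  · obtain ⟨j, rfl⟩ := Fin.exists_succAbove_eq hji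
    simpa using hzz' j fun h => hj (h ▸ rfl)

theorem abs_sub_insertNth_le {n : ℕ} {S : Fin (n + 1) → Type*} {f : (∀ i, S i) → ℝ}
    {c : Fin (n + 1) → ℝ} (hf : HasBoundedDifferences f c) (i : Fin (n + 1)) (y y' : S i)
    (z : ∀ j, S (i.succAbove j)) :
    |f (i.insertNth y z) - f (i.insertNth y' z)| ≤ c i := by
  refine hf _ _ i fun j hj => ?_
  obtain ⟨j, rfl⟩ := Fin.exists_succAbove_eq hj
  simp

end HasBoundedDifferences

theorem hasSubgaussianMGF_sub_integral_of_abs_sub_le {α : Type*} [MeasurableSpace α]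
    {μ : Measure α} [IsProbabilityMeasure μ] {φ : α → ℝ} (hφ : AEMeasurable φ μ) {a : ℝ}
    (h : ∀ x y, |φ x - φ y| ≤ a) :
    HasSubgaussianMGF (fun x => φ x - μ[φ]) ((‖a‖₊ / 2) ^ 2) μ := by
  have := nonempty_of_isProbabilityMeasure μ
  have hbdd : BddBelow (Set.range φ) :=
    ⟨φ this.some - a, Set.forall_mem_range.2 fun x => by linarith [(abs_le.1 (h x this.some)).1]⟩
  have hIcc : ∀ x, φ x ∈ Set.Icc (⨅ y, φ y) ((⨅ y, φ y) + a) := fun x => by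
    have : φ x - a ≤ ⨅ y, φ y := le_ciInf fun y => by linarith [(abs_le.1 (h x y)).2]
    exact ⟨ciInf_le hbdd x, by linarith⟩
  simpa using hasSubgaussianMGF_of_mem_Icc hφ (ae_of_all _ hIcc)

theorem hasSubgaussianMGF_sub_integral_prod {α β : Type*} [MeasurableSpace α]
    [MeasurableSpace β] {μ : Measure α} {ν : Measure β} [IsProbabilityMeasure μ]
    [IsProbabilityMeasure ν] {F : α × β → ℝ} (hF : Measurable F) {C a : ℝ} {cg : ℝ≥0}
    (hF_bdd : ∀ q, |F q| ≤ C) (hF_fst : ∀ y y' z, |F (y, z) - F (y', z)| ≤ a)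
    (hg : HasSubgaussianMGF (fun z => ∫ y, F (y, z) ∂μ - ∫ z', ∫ y, F (y, z') ∂μ ∂ν) cg ν) :
    HasSubgaussianMGF (fun q => F q - ∫ q', F q' ∂μ.prod ν) ((‖a‖₊ / 2) ^ 2 + cg)
      (μ.prod ν) := by
  have hF_int : Integrable F (μ.prod ν) :=
    .of_bound hF.aestronglyMeasurable C (ae_of_all _ hF_bdd)
  rw [← integral_prod_symm F hF_int] at hg
  set E := ∫ q, F q ∂μ.prod ν
  set g := fun z => ∫ y, F (y, z) ∂μ
  have h_fst : ∀ z, HasSubgaussianMGF (fun y => F (y, z) - g z) ((‖a‖₊ / 2) ^ 2) μ := fun z =>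
    hasSubgaussianMGF_sub_integral_of_abs_sub_le (by fun_prop) fun y y' => hF_fst y y' z
  have h_int : ∀ t, Integrable (fun q => exp (t * (F q - E))) (μ.prod ν) := fun t =>
    integrable_exp_mul_of_mem_Icc (a := -C - E) (b := C - E) (by fun_prop)
      (ae_of_all _ fun q => by
        obtain ⟨h₁, h₂⟩ := abs_le.1 (hF_bdd q)
        exact ⟨by linarith, by linarith⟩)
  refine ⟨h_int, fun t => ?_⟩
  calc mgf (fun q => F q - E) (μ.prod ν) t
      = ∫ z, exp (t * (g z - E)) * mgf (fun y => F (y, z) - g z) μ t ∂ν := by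
        simp only [mgf]
        rw [integral_prod_symm _ (h_int t)]
        congr 1 with z
        rw [← integral_const_mul]
        congr 1 with y
        rw [← exp_add]
        ring_nf
    _ ≤ ∫ z, exp (t * (g z - E)) * exp ((‖a‖₊ / 2) ^ 2 * t ^ 2 / 2) ∂ν :=
        integral_mono_of_nonneg (ae_of_all _ fun z => mul_nonneg (exp_pos _).le mgf_nonneg)
          ((hg.integrable_exp_mul t).mul_const _)
          (ae_of_all _ fun z => mul_le_mul_of_nonneg_left ((h_fst z).mgf_le t) (exp_pos _).le)
    _ = mgf (fun z => g z - E) ν t * exp ((‖a‖₊ / 2) ^ 2 * t ^ 2 / 2) :=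
        integral_mul_const _ _
    _ ≤ exp (cg * t ^ 2 / 2) * exp ((‖a‖₊ / 2) ^ 2 * t ^ 2 / 2) := by
        gcongr
        exact hg.mgf_le t
    _ = exp (((‖a‖₊ / 2) ^ 2 + cg : ℝ≥0) * t ^ 2 / 2) := by
        rw [← exp_add]
        push_cast
        ring_nf

theorem HasBoundedDifferences.hasSubgaussianMGF {n : ℕ} {S : Fin n → Type*}
    [∀ i, MeasurableSpace (S i)] {ν : ∀ i, Measure (S i)} [∀ i, IsProbabilityMeasure (ν i)]
    {f : (∀ i, S i) → ℝ} {c : Fin n → ℝ} (hbd : HasBoundedDifferences f c) (hf : Measurable f) :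
    HasSubgaussianMGF (fun x => f x - ∫ y, f y ∂Measure.pi ν) (∑ k, (‖c k‖₊ / 2) ^ 2)
      (Measure.pi ν) := by
  induction n with
  | zero =>
    have h_const : ∀ x, f x - ∫ y, f y ∂Measure.pi ν = 0 := fun x => by
      rw [integral_congr_ae (ae_of_all _ fun y => congrArg f (Subsingleton.elim y x))]
      simp
    simp [h_const]
  | succ n ih =>
    let e := MeasurableEquiv.piFinSuccAbove S 0
    have he := measurePreserving_piFinSuccAbove ν 0
    let F : S 0 × (∀ j, S (Fin.succAbove 0 j)) → ℝ := fun q => f (Fin.insertNth 0 q.1 q.2)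
    have hF : Measurable F := hf.comp e.symm.measurable
    have hFe : ∀ x, F (e x) = f x := fun x => congrArg f (e.symm_apply_apply x)
    obtain ⟨x₀⟩ := nonempty_of_isProbabilityMeasure (Measure.pi ν)
    have hF_bdd : ∀ q, |F q| ≤ |f x₀| + ∑ k, c k := fun q => by
      have : |F q - f x₀| ≤ ∑ k, c k := hbd.abs_sub_le_sum _ x₀
      linarith [abs_sub_abs_le_abs_sub (F q) (f x₀)]
    have hg := ih (ν := fun j => ν (Fin.succAbove 0 j)) (c := fun j => c (Fin.succAbove 0 j))
      (HasBoundedDifferences.integral (μ := ν 0) (fun y => hbd.comp_insertNth 0 y) fun z =>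
        .of_bound (hF.comp measurable_prodMk_right).aestronglyMeasurable _
          (ae_of_all _ fun y => hF_bdd (y, z)))
      hF.stronglyMeasurable.integral_prod_left'.measurable
    have hFE := hasSubgaussianMGF_sub_integral_prod hF hF_bdd (hbd.abs_sub_insertNth_le 0) hg
    rw [← he.map_eq] at hFE
    convert hFE.of_map e.measurable.aemeasurable using 1
    · ext x
      simp only [integral_map_equiv, Function.comp_apply, e, hFe]
    · rw [Fin.sum_univ_succAbove _ 0]

theorem mcdiarmid_inequality_general {Ω : Type*} [MeasurableSpace Ω] (μ : Measure Ω)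
    [IsProbabilityMeasure μ] (m : ℕ) (S : Fin m → Type*)
    [∀ i, MeasurableSpace (S i)] (X : ∀ i, Ω → S i)
    (hmeas : ∀ i, Measurable (X i))
    (hind : iIndepFun X μ)
    (f : (∀ i, S i) → ℝ) (hf : Measurable f)
    (c : Fin m → ℝ)
    (hbd : ∀ (x x' : ∀ i, S i) (k : Fin m),
      (∀ j, j ≠ k → x j = x' j) → |f x - f x'| ≤ c k)
    (t : ℝ) (ht : 0 < t) :
    (μ {ω | f (fun i => X i ω) ≤ (∫ ω', f (fun i => X i ω') ∂μ) - t}).toReal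
      ≤ Real.exp (-2 * t ^ 2 / ∑ k, (c k) ^ 2) := by
  have hX : Measurable fun ω i => X i ω := measurable_pi_lambda _ hmeas
  have hlaw := hind.map_fun_eq_pi_map fun i => (hmeas i).aemeasurable
  have := fun i => Measure.isProbabilityMeasure_map (μ := μ) (hmeas i).aemeasurable
  have hsub := (HasBoundedDifferences.hasSubgaussianMGF
    (ν := fun i => μ.map (X i)) hbd hf).neg
  rw [← hlaw] at hsub
  convert (hsub.of_map hX.aemeasurable).measure_ge_le ht.le using 1
  · rw [measureReal_def]
    congr with ω
    simp only [integral_map hX.aemeasurable hf.aestronglyMeasurable,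
      Function.comp_apply, Pi.neg_apply]
    constructor <;> intro h <;> linarith
  · have : 2 * ∑ k, (‖c k‖ / 2) ^ 2 = (∑ k, c k ^ 2) / 2 := by
      simp only [div_pow, Real.norm_eq_abs, sq_abs, ← Finset.sum_div]
      ring
    push_cast
    rw [this, div_div_eq_mul_div]
    ring_nf

/-- McDiarmid's bounded differences inequality (lower tail): if `X 1, …, X m` are independent
and `f` satisfies the bounded differences condition with constants `c k`, then
`μ[f(X) ≤ 𝔼[f(X)] - t] ≤ exp (-2t² / ∑ c k²)` for every `t > 0`. -/
theorem mcdiarmid_inequality {Ω : Type*} [MeasurableSpace Ω] (μ : Measure Ω)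
    [IsProbabilityMeasure μ] (m : ℕ) (S : Fin m → Type*)
    [∀ i, MeasurableSpace (S i)] (X : ∀ i, Ω → S i)
    (hmeas : ∀ i, Measurable (X i))
    (hind : iIndepFun X μ)
    (f : (∀ i, S i) → ℝ) (hf : Measurable f)
    (c : Fin m → ℝ) (hc : ∀ k, 0 ≤ c k)
    (hbd : ∀ (x x' : ∀ i, S i) (k : Fin m),
      (∀ j, j ≠ k → x j = x' j) → |f x - f x'| ≤ c k)
    (t : ℝ) (ht : 0 < t) :
    (μ {ω | f (fun i => X i ω) ≤ (∫ ω', f (fun i => X i ω') ∂μ) - t}).toReal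
      ≤ Real.exp (-2 * t ^ 2 / ∑ k, (c k) ^ 2) :=
  mcdiarmid_inequality_general μ m S X hmeas hind f hf c hbd t ht
end
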